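/- arXiv:2002.05437 — 3 statements merged into one kernel-verified Lean document; each statement's English description precedes it below -/
import Mathlib

section
/- Let λ_F, λ_R > 0 and k > 0. Let X and Y be independent nonnegative real random variables with tail probabilities P(X > r) = exp(−π λ_F r²) and P(Y > r) = exp(−π λ_R r²) for all r ≥ 0. Then the probability that Y ≥ k·X equals λ_F/(λ_F + k² λ_R), and consequently the probability that Y < k·X equals k² λ_R/(λ_F + k² λ_R). -/
open MeasureTheory ProbabilityTheory Real Set

section AuxRayleigh
open Filter

lemma aux_deriv (c x : ℝ) :
    HasDerivAt (fun x : ℝ => -Real.exp (-(c*x^2))) (2*c*x*Real.exp (-(c*x^2))) x := by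
  have h := (((hasDerivAt_pow 2 x).const_mul c).neg.exp).neg
  exact h.congr_deriv (by simp only [Pi.neg_apply]; norm_num; ring)

lemma aux_tendsto (c : ℝ) (hc : 0 < c) :
    Tendsto (fun x : ℝ => -Real.exp (-(c*x^2))) atTop (nhds 0) := by
  rw [show (0:ℝ) = -0 by ring]
  apply Tendsto.neg
  apply Real.tendsto_exp_atBot.comp
  apply Filter.tendsto_neg_atBot_iff.mpr
  exact (tendsto_pow_atTop two_ne_zero).const_mul_atTop hc

lemma aux_nonneg (c : ℝ) (hc : 0 < c) (a : ℝ) (ha : 0 ≤ a) :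
    ∀ x ∈ Ioi a, 0 ≤ 2*c*x*Real.exp (-(c*x^2)) := by
  intro x hx
  have hx0 : 0 ≤ x := le_trans ha (le_of_lt hx)
  positivity

lemma aux_int (c : ℝ) (hc : 0 < c) (a : ℝ) (ha : 0 ≤ a) :
    ∫ x in Ioi a, 2*c*x*Real.exp (-(c*x^2)) = Real.exp (-(c*a^2)) := by
  have H := integral_Ioi_of_hasDerivAt_of_nonneg' (a := a) (l := 0)
    (fun x _ => aux_deriv c x) (aux_nonneg c hc a ha) (aux_tendsto c hc)
  simpa using H

lemma aux_integrable (c : ℝ) (hc : 0 < c) (a : ℝ) (ha : 0 ≤ a) :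
    IntegrableOn (fun x => 2*c*x*Real.exp (-(c*x^2))) (Ioi a) :=
  integrableOn_Ioi_deriv_of_nonneg' (fun x _ => aux_deriv c x) (aux_nonneg c hc a ha)
    (aux_tendsto c hc)

lemma aux_lint (c : ℝ) (hc : 0 < c) (a : ℝ) (ha : 0 ≤ a) :
    ∫⁻ x in Ioi a, ENNReal.ofReal (2*c*x*Real.exp (-(c*x^2))) =
      ENNReal.ofReal (Real.exp (-(c*a^2))) := by
  rw [← ofReal_integral_eq_lintegral_ofReal (aux_integrable c hc a ha)
    ((ae_restrict_iff' measurableSet_Ioi).2 (Filter.Eventually.of_forall (aux_nonneg c hc a ha))),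
    aux_int c hc a ha]

noncomputable def rayleighM (c : ℝ) : Measure ℝ :=
  (volume.restrict (Ioi (0:ℝ))).withDensity (fun x => ENNReal.ofReal (2*c*x*Real.exp (-(c*x^2))))

lemma rayleighM_apply (c : ℝ) {s : Set ℝ} (hs : MeasurableSet s) :
    rayleighM c s = ∫⁻ x in s ∩ Ioi 0, ENNReal.ofReal (2*c*x*Real.exp (-(c*x^2))) := by
  rw [rayleighM, withDensity_apply _ hs, Measure.restrict_restrict hs]

lemma rayleighM_Ioi (c : ℝ) (hc : 0 < c) (a : ℝ) (ha : 0 ≤ a) :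
    rayleighM c (Ioi a) = ENNReal.ofReal (Real.exp (-(c*a^2))) := by
  rw [rayleighM_apply c measurableSet_Ioi, Ioi_inter_Ioi, max_eq_left ha, aux_lint c hc a ha]

lemma rayleighM_Ici (c : ℝ) (hc : 0 < c) (a : ℝ) (ha : 0 ≤ a) :
    rayleighM c (Ici a) = ENNReal.ofReal (Real.exp (-(c*a^2))) := by
  rw [← rayleighM_Ioi c hc a ha]
  refine le_antisymm ?_ (measure_mono Ioi_subset_Ici_self)
  have h1 : rayleighM c {a} = 0 := by
    rw [rayleighM_apply c (measurableSet_singleton a)]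
    refine setLIntegral_measure_zero _ _ (measure_mono_null inter_subset_left ?_)
    simp
  calc rayleighM c (Ici a) ≤ rayleighM c (Ioi a ∪ {a}) := by
        apply measure_mono; intro x hx
        rcases eq_or_lt_of_le (mem_Ici.mp hx) with h | h
        · exact Or.inr (by simp [h.symm])
        · exact Or.inl h
    _ ≤ rayleighM c (Ioi a) + rayleighM c {a} := measure_union_le _ _
    _ = rayleighM c (Ioi a) := by rw [h1, add_zero]

theorem rayleighM_prob (c : ℝ) (hc : 0 < c) : IsProbabilityMeasure (rayleighM c) := by
  constructor
  have : rayleighM c univ = rayleighM c (Ioi 0) := by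
    rw [rayleighM_apply c MeasurableSet.univ, rayleighM_apply c measurableSet_Ioi]
    simp
  rw [this, rayleighM_Ioi c hc 0 le_rfl]
  simp

lemma map_eq_rayleigh {Ω : Type*} [MeasurableSpace Ω] (μ : Measure Ω) [IsProbabilityMeasure μ]
    (l : ℝ) (hl : 0 < l) (X : Ω → ℝ) (hX : Measurable X) (hXnn : ∀ ω, 0 ≤ X ω)
    (hXtail : ∀ r : ℝ, 0 ≤ r →
      μ {ω | X ω > r} = ENNReal.ofReal (Real.exp (-(π * l * r ^ 2)))) :
    μ.map X = rayleighM (π * l) := by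
  have hc : 0 < π * l := mul_pos Real.pi_pos hl
  have hprob := rayleighM_prob (π*l) hc
  have hmp : IsProbabilityMeasure (μ.map X) := Measure.isProbabilityMeasure_map hX.aemeasurable
  refine MeasureTheory.Measure.ext_of_Iic _ _ (fun a => ?_)
  rw [Measure.map_apply hX measurableSet_Iic]
  rcases lt_or_ge a 0 with ha | ha
  · have h1 : X ⁻¹' Iic a = ∅ := by
      ext ω; simp only [mem_preimage, mem_Iic, mem_empty_iff_false, iff_false, not_le]
      exact lt_of_lt_of_le ha (hXnn ω)
    rw [h1, measure_empty, rayleighM_apply _ measurableSet_Iic]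
    rw [show Iic a ∩ Ioi (0:ℝ) = ∅ by
      ext x; simp only [mem_inter_iff, mem_Iic, mem_Ioi, mem_empty_iff_false, iff_false, not_and,
        not_lt]
      intro hx; exact le_of_lt (lt_of_le_of_lt hx ha)]
    simp
  · have h1 : X ⁻¹' Iic a = (X ⁻¹' Ioi a)ᶜ := by
      ext ω; simp [not_lt]
    have h2 : (Iic a : Set ℝ) = (Ioi a)ᶜ := by simp
    have htail : μ (X ⁻¹' Ioi a) = ENNReal.ofReal (Real.exp (-(π * l * a ^ 2))) := hXtail a ha
    rw [h1, measure_compl (hX measurableSet_Ioi) (measure_ne_top _ _), htail,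
      h2, measure_compl measurableSet_Ioi (measure_ne_top _ _), rayleighM_Ioi _ hc a ha,
      measure_univ, measure_univ]

end AuxRayleigh

theorem stmt0 {Ω : Type*} [MeasurableSpace Ω] (μ : Measure Ω) [IsProbabilityMeasure μ]
    (lF lR k : ℝ) (hlF : 0 < lF) (hlR : 0 < lR) (hk : 0 < k)
    (X Y : Ω → ℝ) (hX : Measurable X) (hY : Measurable Y)
    (hXnn : ∀ ω, 0 ≤ X ω) (hYnn : ∀ ω, 0 ≤ Y ω)
    (hindep : IndepFun X Y μ)
    (hXtail : ∀ r : ℝ, 0 ≤ r →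
      μ {ω | X ω > r} = ENNReal.ofReal (Real.exp (-(π * lF * r ^ 2))))
    (hYtail : ∀ r : ℝ, 0 ≤ r →
      μ {ω | Y ω > r} = ENNReal.ofReal (Real.exp (-(π * lR * r ^ 2)))) :
    μ {ω | Y ω ≥ k * X ω} = ENNReal.ofReal (lF / (lF + k ^ 2 * lR)) ∧
    μ {ω | Y ω < k * X ω} = ENNReal.ofReal (k ^ 2 * lR / (lF + k ^ 2 * lR)) := by
  set cF := π * lF with hcFdef
  set cR := π * lR with hcRdef
  have hcF : 0 < cF := mul_pos Real.pi_pos hlF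
  have hcR : 0 < cR := mul_pos Real.pi_pos hlR
  set c' := cF + cR * k ^ 2 with hc'def
  have hc' : 0 < c' := by positivity
  set S : Set (ℝ × ℝ) := {p : ℝ × ℝ | k * p.1 ≤ p.2} with hSdef
  have hS : MeasurableSet S := measurableSet_le (measurable_fst.const_mul k) measurable_snd
  have hpair : Measurable (fun ω => (X ω, Y ω)) := hX.prodMk hY
  have hsetS : {ω | Y ω ≥ k * X ω} = (fun ω => (X ω, Y ω)) ⁻¹' S := rfl
  have hmap : μ.map (fun ω => (X ω, Y ω)) = (μ.map X).prod (μ.map Y) :=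
    (indepFun_iff_map_prod_eq_prod_map_map hX.aemeasurable hY.aemeasurable).1 hindep
  have hmX : μ.map X = rayleighM cF := map_eq_rayleigh μ lF hlF X hX hXnn hXtail
  have hmY : μ.map Y = rayleighM cR := map_eq_rayleigh μ lR hlR Y hY hYnn hYtail
  have hprobF := rayleighM_prob cF hcF
  have hprobR := rayleighM_prob cR hcR
  have key : μ {ω | Y ω ≥ k * X ω} = ENNReal.ofReal (lF / (lF + k ^ 2 * lR)) := by
    rw [hsetS, ← Measure.map_apply hpair hS, hmap, hmX, hmY, Measure.prod_apply hS]
    have hfiber : ∀ x : ℝ, (Prod.mk x ⁻¹' S) = Ici (k * x) := fun x => rfl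
    simp_rw [hfiber]
    rw [rayleighM, lintegral_withDensity_eq_lintegral_mul_non_measurable _
      ((Continuous.measurable (by continuity)).ennreal_ofReal)
      (Filter.Eventually.of_forall (fun x => ENNReal.ofReal_lt_top))]
    have hcong : ∀ x ∈ Ioi (0:ℝ),
        ((fun x => ENNReal.ofReal (2*cF*x*Real.exp (-(cF*x^2)))) *
          fun x => rayleighM cR (Ici (k * x))) x
        = ENNReal.ofReal (cF/c') * ENNReal.ofReal (2*c'*x*Real.exp (-(c'*x^2))) := by
      intro x hx
      have hx0 : 0 < x := hx
      have hkx : 0 ≤ k * x := by positivity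
      simp only [Pi.mul_apply]
      rw [rayleighM_Ici cR hcR (k*x) hkx, ← ENNReal.ofReal_mul (by positivity),
        ← ENNReal.ofReal_mul (by positivity)]
      congr 1
      have hexp : Real.exp (-(cF*x^2)) * Real.exp (-(cR*(k*x)^2)) =
          Real.exp (-(c'*x^2)) := by
        rw [← Real.exp_add]; congr 1; rw [hc'def]; ring
      calc 2*cF*x*Real.exp (-(cF*x^2)) * Real.exp (-(cR*(k*x)^2))
          = 2*cF*x*(Real.exp (-(cF*x^2)) * Real.exp (-(cR*(k*x)^2))) := by ring
        _ = 2*cF*x*Real.exp (-(c'*x^2)) := by rw [hexp]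
        _ = cF/c' * (2*c'*x*Real.exp (-(c'*x^2))) := by field_simp
    rw [setLIntegral_congr_fun measurableSet_Ioi hcong,
      lintegral_const_mul' _ _ ENNReal.ofReal_ne_top, aux_lint c' hc' 0 le_rfl]
    simp only [ne_eq, OfNat.ofNat_ne_zero, not_false_eq_true, zero_pow, mul_zero, neg_zero,
      Real.exp_zero, ENNReal.ofReal_one, mul_one]
    congr 1
    rw [hcFdef, hc'def, hcFdef, hcRdef, div_eq_div_iff (by positivity) (by positivity)]
    ring
  refine ⟨key, ?_⟩
  have hcompl : {ω | Y ω < k * X ω} = {ω | Y ω ≥ k * X ω}ᶜ := by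
    ext ω; simp [not_le]
  have hms : MeasurableSet {ω | Y ω ≥ k * X ω} := by rw [hsetS]; exact hpair hS
  rw [hcompl, measure_compl hms (measure_ne_top _ _), measure_univ, key]
  have h1 : k ^ 2 * lR / (lF + k ^ 2 * lR) = 1 - lF / (lF + k ^ 2 * lR) := by
    field_simp
    ring
  rw [h1, ENNReal.ofReal_sub _ (by positivity), ENNReal.ofReal_one]
end

section
/- Let λ_F, λ_R > 0 and k > 0. Let X and Y be independent nonnegative real random variables with tail probabilities P(X > r) = exp(−π λ_F r²) and P(Y > r) = exp(−π λ_R r²) for all r ≥ 0. Then for every r ≥ 0, the conditional probability P(X > r | Y ≥ kX) equals exp(−π (λ_F + k² λ_R) r²); that is, conditioned on the event {Y ≥ kX}, X has probability density function f(r) = 2π r (λ_F + k² λ_R) exp(−π r² (λ_F + k² λ_R)) on [0,∞). -/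
open MeasureTheory ProbabilityTheory Real Set Filter

lemma deriv_aux (c : ℝ) (x : ℝ) :
    HasDerivAt (fun x : ℝ => -Real.exp (-(c * x ^ 2))) (2 * c * x * Real.exp (-(c * x ^ 2))) x := by
  have h1 : HasDerivAt (fun x : ℝ => -(c * x ^ 2)) (-(c * (2 * x))) x := by
    exact (((hasDerivAt_pow 2 x).const_mul c).neg).congr_deriv (by simp)
  have := (h1.exp).neg
  exact this.congr_deriv (by ring)

lemma tendsto_aux (c : ℝ) (hc : 0 < c) :
    Tendsto (fun x : ℝ => -Real.exp (-(c * x ^ 2))) atTop (nhds 0) := by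
  rw [show (0:ℝ) = -0 by simp]
  apply Tendsto.neg
  apply Real.tendsto_exp_atBot.comp
  apply Filter.tendsto_neg_atBot_iff.mpr
  exact Tendsto.const_mul_atTop hc (tendsto_pow_atTop (by norm_num))

lemma key_integrable (c : ℝ) (hc : 0 < c) (a : ℝ) (ha : 0 ≤ a) :
    IntegrableOn (fun x => 2 * c * x * Real.exp (-(c * x ^ 2))) (Ioi a) := by
  apply integrableOn_Ioi_deriv_of_nonneg' (fun x _ => deriv_aux c x) _ (tendsto_aux c hc)
  intro x hx
  have hx0 : 0 < x := lt_of_le_of_lt ha hx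
  positivity

lemma key_integral (c : ℝ) (hc : 0 < c) (a : ℝ) (ha : 0 ≤ a) :
    ∫ x in Ioi a, 2 * c * x * Real.exp (-(c * x ^ 2)) = Real.exp (-(c * a ^ 2)) := by
  rw [integral_Ioi_of_hasDerivAt_of_nonneg' (fun x _ => deriv_aux c x)
    (fun x hx => by have hx0 : 0 < x := lt_of_le_of_lt ha hx; positivity) (tendsto_aux c hc)]
  simp



noncomputable def lawD (c : ℝ) : Measure ℝ :=
  volume.withDensity (fun x => ENNReal.ofReal
    (Set.indicator (Ici (0:ℝ)) (fun x => 2 * c * x * Real.exp (-(c * x ^ 2))) x))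

lemma lawD_apply (c : ℝ) {s : Set ℝ} (hs : MeasurableSet s) :
    lawD c s = ∫⁻ x in Ici 0 ∩ s, ENNReal.ofReal (2 * c * x * Real.exp (-(c * x ^ 2))) := by
  have hd : (fun x => ENNReal.ofReal
      (Set.indicator (Ici (0:ℝ)) (fun x => 2 * c * x * Real.exp (-(c * x ^ 2))) x))
      = Set.indicator (Ici (0:ℝ))
        (fun x => ENNReal.ofReal (2 * c * x * Real.exp (-(c * x ^ 2)))) := by
    funext x
    by_cases hx : x ∈ Ici (0:ℝ) <;> simp [Set.indicator_of_mem, Set.indicator_of_notMem, hx]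
  rw [lawD, withDensity_apply _ hs, hd]
  rw [← Measure.restrict_restrict measurableSet_Ici]
  exact lintegral_indicator measurableSet_Ici _

lemma lawD_Ioi (c : ℝ) (hc : 0 < c) (a : ℝ) (ha : 0 ≤ a) :
    lawD c (Ioi a) = ENNReal.ofReal (Real.exp (-(c * a ^ 2))) := by
  have hi : Ici (0:ℝ) ∩ Ioi a = Ioi a :=
    Set.inter_eq_right.mpr (fun x (hx : x ∈ Ioi a) => le_of_lt (lt_of_le_of_lt ha hx))
  rw [lawD_apply c measurableSet_Ioi, hi,
    ← ofReal_integral_eq_lintegral_ofReal (key_integrable c hc a ha)]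
  · rw [key_integral c hc a ha]
  · filter_upwards [ae_restrict_mem measurableSet_Ioi] with x hx
    have hx0 : 0 < x := lt_of_le_of_lt ha hx
    positivity

lemma lawD_univ (c : ℝ) (hc : 0 < c) : lawD c Set.univ = 1 := by
  rw [lawD_apply c MeasurableSet.univ, Set.inter_univ,
    Measure.restrict_congr_set Ioi_ae_eq_Ici.symm]
  have := lawD_Ioi c hc 0 le_rfl
  have hi : Ici (0:ℝ) ∩ Ioi 0 = Ioi 0 :=
    Set.inter_eq_right.mpr (fun x (hx : x ∈ Ioi (0:ℝ)) => Set.mem_Ici.mpr (le_of_lt hx))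
  rw [lawD_apply c measurableSet_Ioi, hi] at this
  rw [this]
  simp

lemma lawD_prob (c : ℝ) (hc : 0 < c) : IsProbabilityMeasure (lawD c) :=
  ⟨lawD_univ c hc⟩

lemma lawD_singleton (c : ℝ) (x : ℝ) : lawD c {x} = 0 := by
  rw [lawD]
  exact (withDensity_absolutelyContinuous _ _) (volume_singleton)

lemma tail_law {Ω : Type*} [MeasurableSpace Ω] (μ : Measure Ω) [IsProbabilityMeasure μ]
    (c : ℝ) (hc : 0 < c) (Z : Ω → ℝ) (hZ : Measurable Z) (hZnn : ∀ ω, 0 ≤ Z ω)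
    (htail : ∀ r : ℝ, 0 ≤ r → μ {ω | Z ω > r} = ENNReal.ofReal (Real.exp (-(c * r ^ 2)))) :
    Measure.map Z μ = lawD c := by
  haveI : IsProbabilityMeasure (Measure.map Z μ) := Measure.isProbabilityMeasure_map hZ.aemeasurable
  haveI := lawD_prob c hc
  have hIoi : ∀ a : ℝ, Measure.map Z μ (Ioi a) = lawD c (Ioi a) := by
    intro a
    rw [Measure.map_apply hZ measurableSet_Ioi]
    rcases le_or_gt 0 a with ha | ha
    · rw [lawD_Ioi c hc a ha]
      exact htail a ha
    · have h1 : Z ⁻¹' Ioi a = Set.univ := by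
        ext ω; simp [Set.mem_preimage, lt_of_lt_of_le ha (hZnn ω)]
      have h2 : Ioi a ⊇ Ioi (0:ℝ) := Ioi_subset_Ioi ha.le
      have h3 : lawD c (Ioi a) = 1 := by
        refine le_antisymm (le_of_le_of_eq (measure_mono (Set.subset_univ _)) (lawD_univ c hc)) ?_
        calc (1:ENNReal) = lawD c (Ioi 0) := by rw [lawD_Ioi c hc 0 le_rfl]; simp
        _ ≤ lawD c (Ioi a) := measure_mono h2
      rw [h1, h3, measure_univ]
  apply Measure.ext_of_Iic
  intro a
  have hL := measure_compl (μ := Measure.map Z μ) measurableSet_Ioi (measure_ne_top _ (Ioi a))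
  have hR := measure_compl (μ := lawD c) measurableSet_Ioi (measure_ne_top _ (Ioi a))
  rw [Set.compl_Ioi] at hL hR
  rw [hL, hR, measure_univ, measure_univ, hIoi a]





lemma lawD_Ici (c : ℝ) (hc : 0 < c) (a : ℝ) (ha : 0 ≤ a) :
    lawD c (Ici a) = ENNReal.ofReal (Real.exp (-(c * a ^ 2))) := by
  have h1 : Ici a = {a} ∪ Ioi a := by
    ext x; simp [le_iff_lt_or_eq, or_comm, eq_comm]
  refine le_antisymm ?_ ?_
  · calc lawD c (Ici a) ≤ lawD c {a} + lawD c (Ioi a) := h1 ▸ measure_union_le _ _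
    _ = ENNReal.ofReal (Real.exp (-(c * a ^ 2))) := by
        rw [lawD_singleton, lawD_Ioi c hc a ha, zero_add]
  · rw [← lawD_Ioi c hc a ha]; exact measure_mono Ioi_subset_Ici_self

section main
variable {Ω : Type*} [MeasurableSpace Ω] (μ : Measure Ω) [IsProbabilityMeasure μ]
    (lF lR k : ℝ) (hlF : 0 < lF) (hlR : 0 < lR) (hk : 0 < k)
    (X Y : Ω → ℝ) (hX : Measurable X) (hY : Measurable Y)
    (hXnn : ∀ ω, 0 ≤ X ω) (hYnn : ∀ ω, 0 ≤ Y ω)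
    (hindep : IndepFun X Y μ)
    (hXtail : ∀ r : ℝ, 0 ≤ r →
      μ {ω | X ω > r} = ENNReal.ofReal (Real.exp (-(π * lF * r ^ 2))))
    (hYtail : ∀ r : ℝ, 0 ≤ r →
      μ {ω | Y ω > r} = ENNReal.ofReal (Real.exp (-(π * lR * r ^ 2))))

include hlF hlR hk hX hY hXnn hYnn hindep hXtail hYtail in
lemma inter_meas (r : ℝ) (hr : 0 ≤ r) :
    μ ({ω | Y ω ≥ k * X ω} ∩ {ω | X ω > r}) =
      ENNReal.ofReal (lF / (lF + k ^ 2 * lR) *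
        Real.exp (-(π * (lF + k ^ 2 * lR) * r ^ 2))) := by
  set ν : ℝ := lF + k ^ 2 * lR with hν
  have hν0 : 0 < ν := by positivity
  have hcF : 0 < π * lF := by positivity
  have hcR : 0 < π * lR := by positivity
  have hcν : 0 < π * ν := by positivity
  have hmapX : Measure.map X μ = lawD (π * lF) :=
    tail_law μ (π * lF) hcF X hX hXnn hXtail
  have hmapY : Measure.map Y μ = lawD (π * lR) :=
    tail_law μ (π * lR) hcR Y hY hYnn hYtail
  set s : Set (ℝ × ℝ) := {p : ℝ × ℝ | k * p.1 ≤ p.2} ∩ {p : ℝ × ℝ | r < p.1} with hsdef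
  have hs : MeasurableSet s :=
    (measurableSet_le (measurable_fst.const_mul k) measurable_snd).inter
      (measurable_fst measurableSet_Ioi)
  have hpre : {ω | Y ω ≥ k * X ω} ∩ {ω | X ω > r} = (fun ω => (X ω, Y ω)) ⁻¹' s := rfl
  have hprod : Measure.map (fun ω => (X ω, Y ω)) μ =
      (Measure.map X μ).prod (Measure.map Y μ) :=
    (indepFun_iff_map_prod_eq_prod_map_map hX.aemeasurable hY.aemeasurable).mp hindep
  haveI : IsProbabilityMeasure (Measure.map Y μ) := Measure.isProbabilityMeasure_map hY.aemeasurable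
  haveI : IsProbabilityMeasure (lawD (π * lR)) := hmapY ▸ this
  rw [hpre, ← Measure.map_apply (hX.prodMk hY) hs, hprod, hmapX, hmapY,
    Measure.prod_apply hs]
  have hfun : (fun x => lawD (π * lR) (Prod.mk x ⁻¹' s)) =
      fun x => (Ioi r).indicator (fun x => lawD (π * lR) (Ici (k * x))) x := by
    funext x
    by_cases hx : r < x
    · rw [Set.indicator_of_mem (show x ∈ Ioi r from hx)]
      congr 1
      ext y
      simp [hsdef, hx]
    · rw [Set.indicator_of_notMem (show x ∉ Ioi r from hx)]
      have : Prod.mk x ⁻¹' s = ∅ := by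
        ext y; simp [hsdef, hx]
      rw [this, measure_empty]
  rw [hfun, lintegral_indicator measurableSet_Ioi]
  have hstep1 : ∫⁻ x in Ioi r, lawD (π * lR) (Ici (k * x)) ∂(lawD (π * lF)) =
      ∫⁻ x in Ioi r, ENNReal.ofReal (Real.exp (-(π * lR * (k * x) ^ 2))) ∂(lawD (π * lF)) := by
    refine setLIntegral_congr_fun measurableSet_Ioi ?_
    intro x hx
    have hkx : 0 ≤ k * x := by
      have : 0 < x := lt_of_le_of_lt hr hx
      positivity
    beta_reduce
    rw [lawD_Ici (π * lR) hcR (k * x) hkx, mul_assoc]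
  rw [hstep1]
  have hmF : Measurable (fun x : ℝ => ENNReal.ofReal ((Ici (0:ℝ)).indicator
      (fun x => 2 * (π * lF) * x * Real.exp (-(π * lF * x ^ 2))) x)) := by
    refine Measurable.ennreal_ofReal (Measurable.indicator ?_ measurableSet_Ici)
    exact (measurable_id.const_mul (2 * (π * lF))).mul
      (Real.measurable_exp.comp (((measurable_id.pow_const 2).const_mul (π * lF)).neg))
  have hmG : Measurable (fun x : ℝ => ENNReal.ofReal (Real.exp (-(π * lR * (k * x) ^ 2)))) := by
    refine Measurable.ennreal_ofReal ?_
    exact Real.measurable_exp.comp ((((measurable_id.const_mul k).pow_const 2).const_mul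
      (π * lR)).neg)
  have hmF' : Measurable (fun x : ℝ => 2 * (π * lF) * x * Real.exp (-(π * lF * x ^ 2))) :=
    (measurable_id.const_mul (2 * (π * lF))).mul
      (Real.measurable_exp.comp (((measurable_id.pow_const 2).const_mul (π * lF)).neg))
  rw [lawD, restrict_withDensity measurableSet_Ioi,
    lintegral_withDensity_eq_lintegral_mul _ hmF hmG]
  have hstep2 : ∫⁻ x in Ioi r,
      ((fun x => ENNReal.ofReal ((Ici (0:ℝ)).indicator
          (fun x => 2 * (π * lF) * x * Real.exp (-(π * lF * x ^ 2))) x)) *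
        (fun x => ENNReal.ofReal (Real.exp (-(π * lR * (k * x) ^ 2))))) x =
      ∫⁻ x in Ioi r, ENNReal.ofReal
        (lF / ν * (2 * (π * ν) * x * Real.exp (-(π * ν * x ^ 2)))) := by
    refine setLIntegral_congr_fun measurableSet_Ioi ?_
    intro x hx
    have hx0 : 0 < x := lt_of_le_of_lt hr hx
    simp only [Pi.mul_apply]
    rw [Set.indicator_of_mem (show x ∈ Ici (0:ℝ) from le_of_lt hx0),
      ← ENNReal.ofReal_mul (by positivity)]
    congr 1
    rw [mul_assoc (2 * (π * lF) * x), ← Real.exp_add]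
    rw [show -(π * lF * x ^ 2) + -(π * lR * (k * x) ^ 2) = -(π * ν * x ^ 2) by rw [hν]; ring]
    field_simp
  rw [hstep2]
  rw [← ofReal_integral_eq_lintegral_ofReal]
  · rw [MeasureTheory.integral_const_mul, key_integral (π * ν) hcν r hr]
  · exact (key_integrable (π * ν) hcν r hr).const_mul _
  · filter_upwards [ae_restrict_mem measurableSet_Ioi] with x hx
    have hx0 : 0 < x := lt_of_le_of_lt hr hx
    positivity
end main





theorem stmt1 {Ω : Type*} [MeasurableSpace Ω] (μ : Measure Ω) [IsProbabilityMeasure μ]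
    (lF lR k : ℝ) (hlF : 0 < lF) (hlR : 0 < lR) (hk : 0 < k)
    (X Y : Ω → ℝ) (hX : Measurable X) (hY : Measurable Y)
    (hXnn : ∀ ω, 0 ≤ X ω) (hYnn : ∀ ω, 0 ≤ Y ω)
    (hindep : IndepFun X Y μ)
    (hXtail : ∀ r : ℝ, 0 ≤ r →
      μ {ω | X ω > r} = ENNReal.ofReal (Real.exp (-(π * lF * r ^ 2))))
    (hYtail : ∀ r : ℝ, 0 ≤ r →
      μ {ω | Y ω > r} = ENNReal.ofReal (Real.exp (-(π * lR * r ^ 2)))) :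
    (∀ r : ℝ, 0 ≤ r →
      μ[{ω | X ω > r} | {ω | Y ω ≥ k * X ω}] =
        ENNReal.ofReal (Real.exp (-(π * (lF + k ^ 2 * lR) * r ^ 2)))) ∧
    Measure.map X (μ[|{ω | Y ω ≥ k * X ω}]) =
      volume.withDensity (fun r : ℝ =>
        ENNReal.ofReal (Set.indicator (Set.Ici (0 : ℝ))
          (fun r => 2 * π * r * (lF + k ^ 2 * lR) *
            Real.exp (-(π * r ^ 2 * (lF + k ^ 2 * lR)))) r)) := by
  have hν0 : 0 < lF + k ^ 2 * lR := by positivity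
  have hratio : 0 < lF / (lF + k ^ 2 * lR) := by positivity
  set B : Set Ω := {ω | Y ω ≥ k * X ω} with hB
  have hBm : MeasurableSet B := measurableSet_le (hX.const_mul k) hY
  have hint := inter_meas μ lF lR k hlF hlR hk X Y hX hY hXnn hYnn hindep hXtail hYtail
  -- measure of B
  have hX0 : μ {ω | X ω > 0} = 1 := by
    rw [hXtail 0 le_rfl]; norm_num
  have hXc : μ {ω | X ω > 0}ᶜ = 0 := by
    rw [measure_compl (measurableSet_lt measurable_const hX) (measure_ne_top _ _), hX0,
      measure_univ, tsub_self]
  have hBmeas : μ B = ENNReal.ofReal (lF / (lF + k ^ 2 * lR)) := by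
    have h1 : μ (B ∩ {ω | X ω > 0}) = ENNReal.ofReal (lF / (lF + k ^ 2 * lR)) := by
      rw [hint 0 le_rfl]; norm_num
    refine le_antisymm ?_ (h1 ▸ measure_mono Set.inter_subset_left)
    calc μ B = μ ((B ∩ {ω | X ω > 0}) ∪ (B ∩ {ω | X ω > 0}ᶜ)) := by
          rw [Set.inter_union_compl]
    _ ≤ μ (B ∩ {ω | X ω > 0}) + μ (B ∩ {ω | X ω > 0}ᶜ) := measure_union_le _ _
    _ ≤ μ (B ∩ {ω | X ω > 0}) + μ {ω | X ω > 0}ᶜ :=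
          add_le_add le_rfl (measure_mono Set.inter_subset_right)
    _ = ENNReal.ofReal (lF / (lF + k ^ 2 * lR)) := by rw [hXc, h1, add_zero]
  have hB0 : μ B ≠ 0 := by
    rw [hBmeas]; simp [ENNReal.ofReal_eq_zero, not_le, hratio]
  -- part 1
  have part1 : ∀ r : ℝ, 0 ≤ r →
      μ[{ω | X ω > r} | B] =
        ENNReal.ofReal (Real.exp (-(π * (lF + k ^ 2 * lR) * r ^ 2))) := by
    intro r hr
    rw [cond_apply hBm, hint r hr, hBmeas, ENNReal.ofReal_mul hratio.le, ← mul_assoc,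
      ENNReal.inv_mul_cancel (by simp [ENNReal.ofReal_eq_zero, not_le, hratio])
        ENNReal.ofReal_ne_top, one_mul]
  refine ⟨part1, ?_⟩
  -- part 2
  haveI hPB : IsProbabilityMeasure (μ[|B]) := cond_isProbabilityMeasure hB0
  have hmap : Measure.map X (μ[|B]) = lawD (π * (lF + k ^ 2 * lR)) := by
    refine tail_law _ _ (by positivity) X hX hXnn ?_
    intro r hr
    exact part1 r hr
  rw [hmap, lawD]
  congr 1
  funext x
  congr 1
  by_cases hx : x ∈ Ici (0:ℝ)
  · rw [Set.indicator_of_mem hx, Set.indicator_of_mem hx,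
      show -(π * (lF + k ^ 2 * lR) * x ^ 2) = -(π * x ^ 2 * (lF + k ^ 2 * lR)) by ring]
    ring
  · rw [Set.indicator_of_notMem hx, Set.indicator_of_notMem hx]
end

section
/- Let λ_F, λ_R > 0 and k > 0. Let X and Y be independent nonnegative real random variables with tail probabilities P(X > r) = exp(−π λ_F r²) and P(Y > r) = exp(−π λ_R r²) for all r ≥ 0. Then for every r ≥ 0, the conditional probability P(Y > r | Y < kX) equals exp(−π r² (λ_F/k² + λ_R)); that is, conditioned on the event {Y < kX}, Y has probability density function f(r) = 2π r (λ_F/k² + λ_R) exp(−π r² (λ_F/k² + λ_R)) on [0,∞). -/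
open MeasureTheory ProbabilityTheory Real Set


lemma ray_deriv {c : ℝ} (y : ℝ) :
    HasDerivAt (fun y : ℝ => -Real.exp (-(π * c * y ^ 2)))
      (2 * π * c * y * Real.exp (-(π * c * y ^ 2))) y := by
  have h1 : HasDerivAt (fun y : ℝ => -(π * c * y ^ 2)) (-(π * c * (2 * y))) y := by
    simpa using ((hasDerivAt_pow 2 y).const_mul (π * c)).fun_neg
  have := h1.exp.fun_neg
  refine this.congr_deriv ?_
  ring

lemma ray_tendsto {c : ℝ} (hc : 0 < c) :
    Filter.Tendsto (fun y : ℝ => -Real.exp (-(π * c * y ^ 2))) Filter.atTop (nhds 0) := by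
  rw [show (0:ℝ) = -0 by ring]
  apply Filter.Tendsto.neg
  apply Real.tendsto_exp_atBot.comp
  apply Filter.tendsto_neg_atBot_iff.mpr
  exact (Filter.tendsto_pow_atTop two_ne_zero).const_mul_atTop (by positivity)

lemma ray_nn {c : ℝ} (hc : 0 < c) {r : ℝ} (hr : 0 ≤ r) :
    ∀ y ∈ Ioi r, 0 ≤ 2 * π * c * y * Real.exp (-(π * c * y ^ 2)) := by
  intro y hy
  have h0 : 0 ≤ y := hr.trans (le_of_lt hy)
  positivity

lemma ray_integrableOn {c : ℝ} (hc : 0 < c) {r : ℝ} (hr : 0 ≤ r) :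
    IntegrableOn (fun y => 2 * π * c * y * Real.exp (-(π * c * y ^ 2))) (Ioi r) := by
  exact integrableOn_Ioi_deriv_of_nonneg' (fun y _ => ray_deriv y) (ray_nn hc hr)
    (ray_tendsto hc)

lemma ray_integral {c : ℝ} (hc : 0 < c) {r : ℝ} (hr : 0 ≤ r) :
    ∫ y in Ioi r, 2 * π * c * y * Real.exp (-(π * c * y ^ 2)) = Real.exp (-(π * c * r ^ 2)) := by
  have := integral_Ioi_of_hasDerivAt_of_nonneg' (fun y _ => ray_deriv y) (ray_nn hc hr)
    (ray_tendsto hc)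
  simpa using this

lemma ray_lintegral {b c : ℝ} (hb : 0 < b) (hc : 0 < c) {r : ℝ} (hr : 0 ≤ r) :
    ∫⁻ y in Ioi r, ENNReal.ofReal (2 * π * b * y * Real.exp (-(π * c * y ^ 2))) =
      ENNReal.ofReal (b / c * Real.exp (-(π * c * r ^ 2))) := by
  have heq : ∀ y : ℝ, 2 * π * b * y * Real.exp (-(π * c * y ^ 2)) =
      (b / c) * (2 * π * c * y * Real.exp (-(π * c * y ^ 2))) := by
    intro y; field_simp
  have hint : IntegrableOn (fun y => 2 * π * b * y * Real.exp (-(π * c * y ^ 2))) (Ioi r) := by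
    simp only [heq]
    exact (ray_integrableOn hc hr).const_mul _
  rw [← ofReal_integral_eq_lintegral_ofReal hint]
  · congr 1
    simp only [heq]
    rw [integral_const_mul, ray_integral hc hr]
  · filter_upwards [ae_restrict_mem measurableSet_Ioi] with y hy
    have h0 : 0 ≤ y := hr.trans (le_of_lt hy)
    positivity

lemma ray_intervalIntegral {c : ℝ} (hc : 0 < c) {a : ℝ} (ha : 0 ≤ a) :
    ∫ y in Ioc (0:ℝ) a, 2 * π * c * y * Real.exp (-(π * c * y ^ 2)) =
      1 - Real.exp (-(π * c * a ^ 2)) := by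
  rw [← intervalIntegral.integral_of_le ha]
  have := intervalIntegral.integral_eq_sub_of_hasDerivAt
    (f := fun y : ℝ => -Real.exp (-(π * c * y ^ 2)))
    (f' := fun y => 2 * π * c * y * Real.exp (-(π * c * y ^ 2)))
    (a := 0) (b := a) (fun y _ => ray_deriv y) ?_
  · rw [this]; simp; ring
  · apply Continuous.intervalIntegrable
    continuity

noncomputable def rayDen (c : ℝ) : ℝ → ENNReal :=
  fun y => ENNReal.ofReal (Set.indicator (Set.Ici (0:ℝ))
    (fun y => 2 * π * c * y * Real.exp (-(π * c * y ^ 2))) y)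

lemma rayDen_eq (c : ℝ) : rayDen c = Set.indicator (Set.Ici (0:ℝ))
    (fun y => ENNReal.ofReal (2 * π * c * y * Real.exp (-(π * c * y ^ 2)))) := by
  funext y
  by_cases hy : y ∈ Set.Ici (0:ℝ) <;>
    simp [rayDen, Set.indicator_of_mem, Set.indicator_of_notMem, hy]

lemma rho_apply (c : ℝ) {s : Set ℝ} (hs : MeasurableSet s) :
    volume.withDensity (rayDen c) s =
      ∫⁻ y in s ∩ Ici 0, ENNReal.ofReal (2 * π * c * y * Real.exp (-(π * c * y ^ 2))) := by
  rw [rayDen_eq, withDensity_indicator measurableSet_Ici, withDensity_apply _ hs,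
    Measure.restrict_restrict hs]

lemma rho_Iic_neg {c : ℝ} {a : ℝ} (ha : a < 0) :
    volume.withDensity (rayDen c) (Iic a) = 0 := by
  rw [rho_apply c measurableSet_Iic]
  have : Iic a ∩ Ici (0:ℝ) = ∅ := by
    ext y; simp only [mem_inter_iff, mem_Iic, mem_Ici, mem_empty_iff_false, iff_false]
    rintro ⟨h1, h2⟩; linarith
  simp [this]

lemma rho_Iic_nonneg {c : ℝ} (hc : 0 < c) {a : ℝ} (ha : 0 ≤ a) :
    volume.withDensity (rayDen c) (Iic a) =
      ENNReal.ofReal (1 - Real.exp (-(π * c * a ^ 2))) := by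
  rw [rho_apply c measurableSet_Iic]
  have h1 : Iic a ∩ Ici (0:ℝ) = Icc 0 a := by ext y; simp [mem_Icc, and_comm]
  rw [h1, ← ray_intervalIntegral hc ha,
    ofReal_integral_eq_lintegral_ofReal]
  · exact (setLIntegral_congr Ioc_ae_eq_Icc).symm
  · have : IntegrableOn (fun y => 2 * π * c * y * Real.exp (-(π * c * y ^ 2))) (Ioc 0 a) := by
      apply Continuous.integrableOn_Ioc; continuity
    exact this
  · filter_upwards [ae_restrict_mem measurableSet_Ioc] with y hy
    have h0 : 0 ≤ y := le_of_lt hy.1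
    positivity

lemma rho_Ioi {c : ℝ} (hc : 0 < c) {a : ℝ} (ha : 0 ≤ a) :
    volume.withDensity (rayDen c) (Ioi a) = ENNReal.ofReal (Real.exp (-(π * c * a ^ 2))) := by
  rw [rho_apply c measurableSet_Ioi]
  have h1 : Ioi a ∩ Ici (0:ℝ) = Ioi a := by
    apply inter_eq_left.mpr; intro y hy; exact le_trans ha (le_of_lt hy)
  rw [h1, ← ray_integral hc ha, ofReal_integral_eq_lintegral_ofReal (ray_integrableOn hc ha)]
  filter_upwards [ae_restrict_mem measurableSet_Ioi] with y hy
  have h0 : 0 ≤ y := ha.trans (le_of_lt hy)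
  positivity

lemma rho_prob {c : ℝ} (hc : 0 < c) :
    IsProbabilityMeasure (volume.withDensity (rayDen c)) := by
  constructor
  have : (univ : Set ℝ) = Iic 0 ∪ Ioi 0 := by simp [Iic_union_Ioi]
  rw [this, measure_union (Set.Iic_disjoint_Ioi le_rfl) measurableSet_Ioi,
    rho_Iic_nonneg hc le_rfl, rho_Ioi hc le_rfl]
  simp

lemma measure_eq_ray {c : ℝ} (hc : 0 < c) (ν : Measure ℝ) [IsProbabilityMeasure ν]
    (h : ∀ r : ℝ, 0 ≤ r → ν (Ioi r) = ENNReal.ofReal (Real.exp (-(π * c * r ^ 2)))) :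
    ν = volume.withDensity (rayDen c) := by
  apply Measure.ext_of_Iic
  intro a
  have hcompl : ∀ b : ℝ, ν (Iic b) = 1 - ν (Ioi b) := by
    intro b
    rw [← Set.compl_Ioi, measure_compl measurableSet_Ioi (measure_ne_top ν _), measure_univ]
  rcases lt_or_ge a 0 with ha|ha
  · rw [rho_Iic_neg ha]
    have h1 : ν (Iic a) ≤ ν (Iic 0) := measure_mono (Iic_subset_Iic.mpr ha.le)
    have h2 : ν (Iic 0) = 0 := by rw [hcompl, h 0 le_rfl]; simp
    exact le_antisymm (h2 ▸ h1) zero_le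
  · rw [rho_Iic_nonneg hc ha, hcompl, h a ha,
      ENNReal.ofReal_sub _ (Real.exp_nonneg _), ENNReal.ofReal_one]


lemma rayDen_measurable (c : ℝ) : Measurable (rayDen c) := by
  apply ENNReal.measurable_ofReal.comp
  apply Measurable.indicator _ measurableSet_Ici
  fun_prop

theorem stmt2 {Ω : Type*} [MeasurableSpace Ω] (μ : Measure Ω) [IsProbabilityMeasure μ]
    (lF lR k : ℝ) (hlF : 0 < lF) (hlR : 0 < lR) (hk : 0 < k)
    (X Y : Ω → ℝ) (hX : Measurable X) (hY : Measurable Y)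
    (hXnn : ∀ ω, 0 ≤ X ω) (hYnn : ∀ ω, 0 ≤ Y ω)
    (hindep : IndepFun X Y μ)
    (hXtail : ∀ r : ℝ, 0 ≤ r →
      μ {ω | X ω > r} = ENNReal.ofReal (Real.exp (-(π * lF * r ^ 2))))
    (hYtail : ∀ r : ℝ, 0 ≤ r →
      μ {ω | Y ω > r} = ENNReal.ofReal (Real.exp (-(π * lR * r ^ 2)))) :
    (∀ r : ℝ, 0 ≤ r →
      μ[{ω | Y ω > r} | {ω | Y ω < k * X ω}] =
        ENNReal.ofReal (Real.exp (-(π * r ^ 2 * (lF / k ^ 2 + lR))))) ∧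
    Measure.map Y (μ[|{ω | Y ω < k * X ω}]) =
      volume.withDensity (fun r : ℝ =>
        ENNReal.ofReal (Set.indicator (Set.Ici (0 : ℝ))
          (fun r => 2 * π * r * (lF / k ^ 2 + lR) *
            Real.exp (-(π * r ^ 2 * (lF / k ^ 2 + lR)))) r)) := by
  set c : ℝ := lF / k ^ 2 + lR with hc_def
  have hc : 0 < c := by positivity
  set E : Set Ω := {ω | Y ω < k * X ω} with hE_def
  have hEmeas : MeasurableSet E := measurableSet_lt hY (hX.const_mul k)
  -- laws
  haveI : IsProbabilityMeasure (μ.map X) := Measure.isProbabilityMeasure_map hX.aemeasurable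
  haveI : IsProbabilityMeasure (μ.map Y) := Measure.isProbabilityMeasure_map hY.aemeasurable
  have hXmap : ∀ r : ℝ, 0 ≤ r → (μ.map X) (Ioi r) =
      ENNReal.ofReal (Real.exp (-(π * lF * r ^ 2))) := by
    intro r hr
    rw [Measure.map_apply hX measurableSet_Ioi]
    exact hXtail r hr
  have hYmap : ∀ r : ℝ, 0 ≤ r → (μ.map Y) (Ioi r) =
      ENNReal.ofReal (Real.exp (-(π * lR * r ^ 2))) := by
    intro r hr
    rw [Measure.map_apply hY measurableSet_Ioi]
    exact hYtail r hr
  have hνY : μ.map Y = volume.withDensity (rayDen lR) := measure_eq_ray hlR _ hYmap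
  have hjoint : μ.map (fun ω => (Y ω, X ω)) = (μ.map Y).prod (μ.map X) :=
    (indepFun_iff_map_prod_eq_prod_map_map hY.aemeasurable hX.aemeasurable).mp hindep.symm
  -- key computation
  have key : ∀ r : ℝ, 0 ≤ r → μ ({ω | Y ω > r} ∩ E) =
      ENNReal.ofReal (lR / c * Real.exp (-(π * c * r ^ 2))) := by
    intro r hr
    have hSmeas : MeasurableSet {p : ℝ × ℝ | r < p.1 ∧ p.1 < k * p.2} :=
      (measurableSet_lt measurable_const measurable_fst).inter
        (measurableSet_lt measurable_fst (measurable_snd.const_mul k))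
    have hpre : (fun ω => (Y ω, X ω)) ⁻¹' {p : ℝ × ℝ | r < p.1 ∧ p.1 < k * p.2} =
        {ω | Y ω > r} ∩ E := rfl
    rw [← hpre, ← Measure.map_apply (hY.prodMk hX) hSmeas, hjoint,
      Measure.prod_apply hSmeas]
    have hfib : (fun y : ℝ => (μ.map X) (Prod.mk y ⁻¹' {p : ℝ × ℝ | r < p.1 ∧ p.1 < k * p.2})) =
        (Ioi r).indicator (fun y => (μ.map X) (Ioi (y / k))) := by
      funext y
      by_cases hy : r < y
      · rw [Set.indicator_of_mem (show y ∈ Ioi r from hy)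
          (fun y => (μ.map X) (Ioi (y / k)))]
        congr 1
        ext x
        simp [hy, mem_Ioi, div_lt_iff₀ hk, mul_comm]
      · rw [Set.indicator_of_notMem (show y ∉ Ioi r from hy)
          (fun y => (μ.map X) (Ioi (y / k)))]
        have : Prod.mk y ⁻¹' {p : ℝ × ℝ | r < p.1 ∧ p.1 < k * p.2} = ∅ := by
          ext x; simp [hy]
        simp [this]
    rw [lintegral_congr fun y => congrFun hfib y,
      lintegral_indicator measurableSet_Ioi]
    have step1 : ∫⁻ y in Ioi r, (μ.map X) (Ioi (y / k)) ∂(μ.map Y) =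
        ∫⁻ y in Ioi r, ENNReal.ofReal (Real.exp (-(π * lF * (y / k) ^ 2))) ∂(μ.map Y) := by
      apply setLIntegral_congr_fun measurableSet_Ioi
      intro y hy
      have hy0 : 0 ≤ y := le_trans hr (le_of_lt hy)
      exact hXmap (y / k) (by positivity)
    rw [step1, hνY, setLIntegral_withDensity_eq_setLIntegral_mul _ (rayDen_measurable lR)
      (by fun_prop) measurableSet_Ioi]
    have step2 : ∫⁻ y in Ioi r, (rayDen lR * fun y =>
          ENNReal.ofReal (Real.exp (-(π * lF * (y / k) ^ 2)))) y =
        ∫⁻ y in Ioi r, ENNReal.ofReal (2 * π * lR * y * Real.exp (-(π * c * y ^ 2))) := by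
      apply setLIntegral_congr_fun measurableSet_Ioi
      intro y hy
      have hy0 : 0 ≤ y := le_trans hr (le_of_lt hy)
      simp only [Pi.mul_apply, rayDen, indicator_of_mem (mem_Ici.mpr hy0)]
      rw [← ENNReal.ofReal_mul (by positivity)]
      congr 1
      rw [mul_assoc, ← Real.exp_add]
      congr 1
      rw [hc_def, div_pow]
      field_simp
      ring
    rw [step2, ray_lintegral hlR hc hr]
  -- probability of E
  have hY0 : μ {ω | Y ω ≤ 0} = 0 := by
    have h1 : μ {ω | Y ω > 0} = 1 := by
      have := hYtail 0 le_rfl; simpa using this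
    have h2 : {ω | Y ω ≤ 0} = {ω | Y ω > 0}ᶜ := by
      ext ω; simp [not_lt]
    rw [h2, measure_compl (measurableSet_lt measurable_const hY) (measure_ne_top μ _), h1,
      measure_univ, tsub_self]
  have hE : μ E = ENNReal.ofReal (lR / c) := by
    have h1 : μ E = μ ({ω | Y ω > 0} ∩ E) := by
      apply le_antisymm
      · calc μ E ≤ μ (({ω | Y ω > 0} ∩ E) ∪ {ω | Y ω ≤ 0}) := by
              apply measure_mono
              intro ω hω
              rcases le_or_gt (Y ω) 0 with h|h
              · exact Or.inr h
              · exact Or.inl ⟨h, hω⟩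
          _ ≤ μ ({ω | Y ω > 0} ∩ E) + μ {ω | Y ω ≤ 0} := measure_union_le _ _
          _ = μ ({ω | Y ω > 0} ∩ E) := by rw [hY0, add_zero]
      · exact measure_mono inter_subset_right
    rw [h1, key 0 le_rfl]
    simp
  have hEne : μ E ≠ 0 := by
    rw [hE]
    simp only [ne_eq, ENNReal.ofReal_eq_zero, not_le]
    positivity
  -- part 1 (in πcr² form)
  have part1 : ∀ r : ℝ, 0 ≤ r → μ[{ω | Y ω > r} | E] =
      ENNReal.ofReal (Real.exp (-(π * c * r ^ 2))) := by
    intro r hr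
    rw [cond_apply hEmeas, inter_comm, key r hr, hE,
      ENNReal.ofReal_mul (by positivity), ← mul_assoc,
      ENNReal.inv_mul_cancel (by simp only [ne_eq, ENNReal.ofReal_eq_zero, not_le]; positivity)
        ENNReal.ofReal_ne_top, one_mul]
  constructor
  · intro r hr
    rw [part1 r hr]
    congr 2
    ring
  · haveI : IsProbabilityMeasure (μ[|E]) := cond_isProbabilityMeasure hEne
    haveI : IsProbabilityMeasure ((μ[|E]).map Y) := Measure.isProbabilityMeasure_map hY.aemeasurable
    have htails : ∀ r : ℝ, 0 ≤ r → ((μ[|E]).map Y) (Ioi r) =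
        ENNReal.ofReal (Real.exp (-(π * c * r ^ 2))) := by
      intro r hr
      rw [Measure.map_apply hY measurableSet_Ioi]
      exact part1 r hr
    rw [measure_eq_ray hc _ htails]
    congr 1
    funext y
    simp only [rayDen]
    congr 1
    by_cases hy : y ∈ Ici (0:ℝ)
    · rw [Set.indicator_of_mem hy, Set.indicator_of_mem hy,
        show -(π * y ^ 2 * c) = -(π * c * y ^ 2) by ring]
      ring
    · rw [Set.indicator_of_notMem hy, Set.indicator_of_notMem hy]
end
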